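/- arXiv:math/0406088 — 3 statements merged into one kernel-verified Lean document; each statement's English description precedes it below -/
import Mathlib

section
/- For every integer n ≥ 4 with n not divisible by 3, writing c = cos(π/n), the quantity h := √(1+c)·√(√(8c²+1) - 3c)/(1-c) satisfies h ≥ 1. -/
open Real

theorem stmt1 (n : ℕ) (hn : 4 ≤ n) (h3 : ¬ (3 ∣ n)) :
    1 ≤ Real.sqrt (1 + Real.cos (π / n)) *
        Real.sqrt (Real.sqrt (8 * Real.cos (π / n) ^ 2 + 1) - 3 * Real.cos (π / n)) /
        (1 - Real.cos (π / n)) := by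
  set c := Real.cos (π / n) with hc
  have hn4 : (4 : ℝ) ≤ (n : ℝ) := by exact_mod_cast hn
  have hx0 : 0 < π / n := by positivity
  have hx4 : π / n ≤ π / 4 := by
    apply div_le_div_of_nonneg_left Real.pi_pos.le (by norm_num) hn4
  have hc0 : 0 < c := by
    apply Real.cos_pos_of_mem_Ioo
    constructor
    · linarith [Real.pi_pos]
    · calc π / n ≤ π / 4 := hx4
        _ < π / 2 := by linarith [Real.pi_pos]
  have hc1 : c < 1 := by
    have h := Real.cos_lt_cos_of_nonneg_of_le_pi (le_refl 0)
      (by linarith [Real.pi_pos] : π / n ≤ π) hx0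
    simpa using h
  set s := Real.sqrt (8 * c ^ 2 + 1) with hs
  have hs0 : 0 ≤ s := Real.sqrt_nonneg _
  have hs2 : s ^ 2 = 8 * c ^ 2 + 1 := Real.sq_sqrt (by positivity)
  -- key: (1+c)*s ≥ 4c² + c + 1
  have hkey : 4 * c ^ 2 + c + 1 ≤ (1 + c) * s := by
    nlinarith [hs2, hs0, hc0, hc1,
      mul_nonneg (by linarith : (0:ℝ) ≤ 1 + c) hs0,
      mul_nonneg (pow_nonneg hc0.le 3) (by linarith : (0:ℝ) ≤ 1 - c)]
  have hA : (1 - c) ^ 2 ≤ (1 + c) * (s - 3 * c) := by nlinarith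
  have h1c : 0 ≤ 1 + c := by linarith
  have h2 : 1 - c ≤ Real.sqrt (1 + c) * Real.sqrt (s - 3 * c) := by
    rw [← Real.sqrt_mul h1c]
    calc 1 - c = Real.sqrt ((1 - c) ^ 2) := by
          rw [Real.sqrt_sq (by linarith)]
      _ ≤ Real.sqrt ((1 + c) * (s - 3 * c)) := Real.sqrt_le_sqrt hA
  rw [le_div_iff₀ (by linarith)]
  linarith
end

section
/- For an integer n ≥ 4 and c = cos(π/n), given h chosen by the formula h = √(1+c)·√(√(8c²+1)-3c)/(1-c) and r = √(2c-1+(1-c)²h²)/c, the relation sin θ = (1-c)h/((1+c)r) defines a valid angle, i.e., 0 < (1-c)h/((1+c)r) < 1. -/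
open Real

theorem stmt15 (n : ℕ) (hn : 4 ≤ n) (h3 : ¬ (3 ∣ n)) :
    let c := Real.cos (π / n)
    let h := Real.sqrt (1 + c) * Real.sqrt (Real.sqrt (8 * c ^ 2 + 1) - 3 * c) / (1 - c)
    let r := Real.sqrt (2 * c - 1 + (1 - c) ^ 2 * h ^ 2) / c
    0 < (1 - c) * h / ((1 + c) * r) ∧ (1 - c) * h / ((1 + c) * r) < 1 := by
  intro c h r
  have hrdef : r = Real.sqrt (2 * c - 1 + (1 - c) ^ 2 * h ^ 2) / c := rfl
  have hn0 : (0:ℝ) < n := by exact_mod_cast (by omega : 0 < n)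
  have hπpos := Real.pi_pos
  have hlt3 : π / n < π / 3 := by
    apply div_lt_div_of_pos_left hπpos (by norm_num)
    exact_mod_cast by omega
  have hc_half : (1:ℝ)/2 < c := by
    have := Real.cos_lt_cos_of_nonneg_of_le_pi (le_of_lt (div_pos hπpos hn0))
      (by linarith [div_le_self hπpos.le (by norm_num : (1:ℝ) ≤ 3)]) hlt3
    rw [Real.cos_pi_div_three] at this
    exact this
  have hc1 : c < 1 := by
    have h0 : (0:ℝ) < π / n := div_pos hπpos hn0
    have := Real.cos_lt_cos_of_nonneg_of_le_pi le_rfl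
      (by linarith [div_le_self hπpos.le (by exact_mod_cast (by omega : (1:ℕ) ≤ n) : (1:ℝ) ≤ n)]) h0
    rwa [Real.cos_zero] at this
  have hcpos : (0:ℝ) < c := by linarith
  have hs : 3 * c < Real.sqrt (8 * c ^ 2 + 1) := by
    rw [show (8 * c ^ 2 + 1 : ℝ) = (8 * c ^ 2 + 1) by ring]
    have : (3 * c) ^ 2 < 8 * c ^ 2 + 1 := by nlinarith
    exact (Real.lt_sqrt (by positivity)).mpr this
  have hh : 0 < h := by
    apply div_pos
    · exact mul_pos (Real.sqrt_pos.mpr (by linarith)) (Real.sqrt_pos.mpr (by linarith))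
    · linarith
  have hinner : 0 < 2 * c - 1 + (1 - c) ^ 2 * h ^ 2 := by
    have : (0:ℝ) ≤ (1 - c) ^ 2 * h ^ 2 := by positivity
    linarith
  have hr : 0 < r := by
    rw [hrdef]; exact div_pos (Real.sqrt_pos.mpr hinner) hcpos
  have hkey : (1 - c) * h < (1 + c) * r := by
    have hsq : Real.sqrt ((1 - c) ^ 2 * h ^ 2) = (1 - c) * h := by
      rw [show (1 - c) ^ 2 * h ^ 2 = ((1 - c) * h) ^ 2 by ring]
      exact Real.sqrt_sq (mul_nonneg (by linarith) hh.le)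
    have hlt : (1 - c) * h < Real.sqrt (2 * c - 1 + (1 - c) ^ 2 * h ^ 2) := by
      rw [← hsq]
      exact Real.sqrt_lt_sqrt (by positivity) (by linarith)
    have hcr : c * r = Real.sqrt (2 * c - 1 + (1 - c) ^ 2 * h ^ 2) := by
      rw [hrdef]; field_simp
    nlinarith [hr]
  constructor
  · exact div_pos (mul_pos (by linarith) hh) (mul_pos (by linarith) hr)
  · rw [div_lt_one (mul_pos (by linarith) hr)]
    exact hkey
end

section
/- Dirichlet-type orbit count: if n ≢ 0 (mod 3), the identification of the 4n internal edges of the polyhedron CP_n under the step-k face pairing (identifying face c_i a_{i+1} a_i b_i with face d_{i+k} c_{i+k} b_{i+k+1} d_{i+k+1} for each i mod n) yields exactly one equivalence class; if n ≡ 0 (mod 3), it yields exactly three classes of 4n/3 edges each. -/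
/-- The internal edges of `𝒞𝒫ₙ`: `(i, 0) = aᵢ`, `(i, 1) = bᵢ`, `(i, 2) = cᵢ`,
`(i, 3) = dᵢ` for `i ∈ ℤ/n`. -/
abbrev CPEdge (n : ℕ) := ZMod n × Fin 4

/-- The edge identifications induced by the step-`k` face pairing, which sends the
face `cᵢ aᵢ₊₁ aᵢ bᵢ` to the face `dᵢ₊ₖ cᵢ₊ₖ bᵢ₊ₖ₊₁ dᵢ₊ₖ₊₁` in this order, i.e.
`cᵢ ~ dᵢ₊ₖ`, `aᵢ₊₁ ~ cᵢ₊ₖ`, `aᵢ ~ bᵢ₊ₖ₊₁`, `bᵢ ~ dᵢ₊ₖ₊₁`. -/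
def stepRel (n k : ℕ) (x y : CPEdge n) : Prop :=
  ∃ i : ZMod n,
    (x = (i, 2) ∧ y = (i + k, 3)) ∨
    (x = (i + 1, 0) ∧ y = (i + k, 2)) ∨
    (x = (i, 0) ∧ y = (i + k + 1, 1)) ∨
    (x = (i, 1) ∧ y = (i + k + 1, 3))

namespace Stmt16Aux

variable {n k : ℕ}

private lemma mk_c (i : ZMod n) :
    Quot.mk (stepRel n k) (i, 2) = Quot.mk (stepRel n k) ((i + k : ZMod n), 3) :=
  Quot.sound ⟨i, Or.inl ⟨rfl, rfl⟩⟩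

private lemma mk_a (i : ZMod n) :
    Quot.mk (stepRel n k) ((i + 1 : ZMod n), 0) = Quot.mk (stepRel n k) ((i + k : ZMod n), 2) :=
  Quot.sound ⟨i, Or.inr (Or.inl ⟨rfl, rfl⟩)⟩

private lemma mk_ab (i : ZMod n) :
    Quot.mk (stepRel n k) (i, 0) = Quot.mk (stepRel n k) ((i + k + 1 : ZMod n), 1) :=
  Quot.sound ⟨i, Or.inr (Or.inr (Or.inl ⟨rfl, rfl⟩))⟩

private lemma mk_bd (i : ZMod n) :
    Quot.mk (stepRel n k) (i, 1) = Quot.mk (stepRel n k) ((i + k + 1 : ZMod n), 3) :=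
  Quot.sound ⟨i, Or.inr (Or.inr (Or.inr ⟨rfl, rfl⟩))⟩

private lemma mk_step (i : ZMod n) :
    Quot.mk (stepRel n k) ((i + 3 : ZMod n), 0) = Quot.mk (stepRel n k) (i, 0) := by
  calc Quot.mk (stepRel n k) ((i + 3 : ZMod n), 0)
      = Quot.mk (stepRel n k) ((i + 2 + 1 : ZMod n), 0) := by
        rw [show (i + 3 : ZMod n) = i + 2 + 1 by ring]
    _ = Quot.mk (stepRel n k) ((i + 2 + k : ZMod n), 2) := mk_a _
    _ = Quot.mk (stepRel n k) ((i + k + 2 : ZMod n), 2) := by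
        rw [show (i + 2 + (k : ZMod n) : ZMod n) = i + k + 2 by ring]
    _ = Quot.mk (stepRel n k) ((i + k + 2 + k : ZMod n), 3) := mk_c _
    _ = Quot.mk (stepRel n k) ((i + k + 1 + k + 1 : ZMod n), 3) := by
        rw [show (i + (k:ZMod n) + 2 + k : ZMod n) = i + k + 1 + k + 1 by ring]
    _ = Quot.mk (stepRel n k) ((i + k + 1 : ZMod n), 1) := (mk_bd _).symm
    _ = Quot.mk (stepRel n k) (i, 0) := (mk_ab i).symm

private lemma mk_add_three_mul (m : ℕ) (i : ZMod n) :
    Quot.mk (stepRel n k) ((i + 3 * (m : ZMod n) : ZMod n), 0) = Quot.mk (stepRel n k) (i, 0) := by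
  induction m with
  | zero => simp
  | succ m ih =>
      have e : (i + 3 * ((m + 1 : ℕ) : ZMod n) : ZMod n) = (i + 3 * (m : ZMod n)) + 3 := by
        push_cast; ring
      rw [e, mk_step (i + 3 * (m : ZMod n)), ih]

/-- `toA x` is the index `j` such that `x` is identified with the edge `aⱼ`. -/
private def toA (k : ℕ) (x : CPEdge n) : ZMod n :=
  x.1 - ![0, (k : ZMod n) + 1, (k : ZMod n) - 1, (k : ZMod n) + k - 1] x.2

private lemma mk_toA (x : CPEdge n) :
    Quot.mk (stepRel n k) x = Quot.mk (stepRel n k) (toA k x, 0) := by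
  obtain ⟨i, t⟩ := x
  have e0 : toA (n := n) k (i, 0) = i := by simp [toA]
  have e1 : toA (n := n) k (i, 1) = i - k - 1 := by
    show i - ((k : ZMod n) + 1) = i - k - 1; ring
  have e2 : toA (n := n) k (i, 2) = i - k + 1 := by
    show i - ((k : ZMod n) - 1) = i - k + 1; ring
  have e3 : toA (n := n) k (i, 3) = i - k - k + 1 := by
    show i - ((k : ZMod n) + k - 1) = i - k - k + 1; ring
  fin_cases t
  · show Quot.mk (stepRel n k) (i, 0) = Quot.mk (stepRel n k) (toA k (i, 0), 0)
    rw [e0]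
  · show Quot.mk (stepRel n k) (i, 1) = Quot.mk (stepRel n k) (toA k (i, 1), 0)
    rw [e1]
    have h := mk_ab (n := n) (k := k) (i - k - 1)
    rw [show (i - (k:ZMod n) - 1 + k + 1 : ZMod n) = i by ring] at h
    exact h.symm
  · show Quot.mk (stepRel n k) (i, 2) = Quot.mk (stepRel n k) (toA k (i, 2), 0)
    rw [e2]
    have h := mk_a (n := n) (k := k) (i - k)
    rw [show (i - (k:ZMod n) + k : ZMod n) = i by ring] at h
    exact h.symm
  · show Quot.mk (stepRel n k) (i, 3) = Quot.mk (stepRel n k) (toA k (i, 3), 0)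
    rw [e3]
    have h1 := mk_c (n := n) (k := k) (i - k)
    rw [show (i - (k:ZMod n) + k : ZMod n) = i by ring] at h1
    have h2 := mk_a (n := n) (k := k) (i - k - k)
    rw [show (i - (k:ZMod n) - k + k : ZMod n) = i - k by ring] at h2
    exact (h1.symm.trans h2.symm)

/-- The labels' contribution to the `ℤ/3`-invariant. -/
private def cIdx (k : ℕ) : Fin 4 → ZMod 3 :=
  ![2 * (k : ZMod 3) + 2, (k : ZMod 3) + 1, (k : ZMod 3), 0]

/-- The `ℤ/3`-invariant of an edge (when `3 ∣ n`). -/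
private def phi (h3 : 3 ∣ n) (k : ℕ) (x : CPEdge n) : ZMod 3 :=
  ZMod.castHom h3 (ZMod 3) x.1 + cIdx k x.2

private lemma three_zero : (3 : ZMod 3) = 0 := by decide

private lemma phi_rel (h3 : 3 ∣ n) : ∀ x y : CPEdge n, stepRel n k x y → phi h3 k x = phi h3 k y := by
  rintro x y ⟨i, (⟨rfl, rfl⟩ | ⟨rfl, rfl⟩ | ⟨rfl, rfl⟩ | ⟨rfl, rfl⟩)⟩ <;>
    simp only [phi, cIdx, map_add, map_natCast, map_one,
      Matrix.cons_val_zero, Matrix.cons_val_one, Matrix.head_cons,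
      Matrix.cons_val_two, Matrix.tail_cons, Matrix.cons_val_three] <;>
    first
      | linear_combination three_zero
      | linear_combination -three_zero
      | linear_combination 2 * three_zero
      | linear_combination -2 * three_zero
      | ring

private lemma phi_toA (h3 : 3 ∣ n) (x : CPEdge n) :
    phi h3 k x = phi h3 k (toA k x, 0) := by
  obtain ⟨i, t⟩ := x
  fin_cases t
  · show ZMod.castHom h3 (ZMod 3) i + (2 * (k : ZMod 3) + 2) =
      ZMod.castHom h3 (ZMod 3) (i - 0) + (2 * (k : ZMod 3) + 2)
    rw [sub_zero]
  · show ZMod.castHom h3 (ZMod 3) i + ((k : ZMod 3) + 1) =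
      ZMod.castHom h3 (ZMod 3) (i - ((k : ZMod n) + 1)) + (2 * (k : ZMod 3) + 2)
    rw [map_sub, map_add, map_natCast, map_one]
    ring
  · show ZMod.castHom h3 (ZMod 3) i + (k : ZMod 3) =
      ZMod.castHom h3 (ZMod 3) (i - ((k : ZMod n) - 1)) + (2 * (k : ZMod 3) + 2)
    rw [map_sub, map_sub, map_natCast, map_one]
    linear_combination -three_zero
  · show ZMod.castHom h3 (ZMod 3) i + 0 =
      ZMod.castHom h3 (ZMod 3) (i - ((k : ZMod n) + (k : ZMod n) - 1)) + (2 * (k : ZMod 3) + 2)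
    rw [map_sub, map_sub, map_add, map_natCast, map_one]
    linear_combination -three_zero

private lemma pi_eq_zero_iff (h3 : 3 ∣ n) [NeZero n] (u : ZMod n) :
    ZMod.castHom h3 (ZMod 3) u = 0 ↔ 3 ∣ u.val := by
  rw [ZMod.castHom_apply, ← ZMod.natCast_val, ZMod.natCast_eq_zero_iff]

private lemma mk_eq_of_pi_eq (h3 : 3 ∣ n) [NeZero n] {i j : ZMod n}
    (h : ZMod.castHom h3 (ZMod 3) i = ZMod.castHom h3 (ZMod 3) j) :
    Quot.mk (stepRel n k) (i, 0) = Quot.mk (stepRel n k) (j, 0) := by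
  have h0 : ZMod.castHom h3 (ZMod 3) (i - j) = 0 := by rw [map_sub, h, sub_self]
  have hd : 3 ∣ (i - j).val := (pi_eq_zero_iff h3 _).mp h0
  obtain ⟨m, hm⟩ := hd
  have : i = j + 3 * (m : ZMod n) := by
    have : ((i - j).val : ZMod n) = i - j := ZMod.natCast_zmod_val _
    rw [hm] at this
    push_cast at this
    linear_combination -this
  rw [this, mk_add_three_mul]

end Stmt16Aux

open Stmt16Aux in
theorem stmt16 (n k : ℕ) (hn : 1 ≤ n) (hk : k < n) :
    (¬ (3 ∣ n) → Nat.card (Quot (stepRel n k)) = 1) ∧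
    ((3 ∣ n) → Nat.card (Quot (stepRel n k)) = 3 ∧
      ∀ q : Quot (stepRel n k), Nat.card {x : CPEdge n // Quot.mk (stepRel n k) x = q} = 4 * n / 3) := by
  haveI : NeZero n := ⟨by omega⟩
  constructor
  · -- 3 ∤ n : one class
    intro h3
    have hu : IsUnit ((3 : ℕ) : ZMod n) := by
      rw [ZMod.isUnit_iff_coprime]
      exact (Nat.Prime.coprime_iff_not_dvd Nat.prime_three).mpr h3
    have key : ∀ x : CPEdge n, Quot.mk (stepRel n k) x = Quot.mk (stepRel n k) ((0 : ZMod n), 0) := by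
      intro x
      rw [mk_toA x]
      obtain ⟨t, ht⟩ := hu.exists_left_inv
      set j := toA k x with hj
      have hv : (3 : ZMod n) * ((t * j).val : ZMod n) = j := by
        rw [ZMod.natCast_zmod_val]
        calc (3 : ZMod n) * (t * j) = (t * (3:ℕ)) * j := by push_cast; ring
          _ = j := by rw [ht, one_mul]
      have := mk_add_three_mul (n := n) (k := k) ((t * j).val) 0
      rw [zero_add, hv] at this
      exact this
    have h1 : ∀ q : Quot (stepRel n k), q = Quot.mk (stepRel n k) ((0 : ZMod n), 0) := by
      intro q
      induction q using Quot.ind with | _ x => exact key x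
    rw [Nat.card_eq_one_iff_unique]
    exact ⟨⟨fun a b => (h1 a).trans (h1 b).symm⟩, ⟨Quot.mk _ ((0 : ZMod n), 0)⟩⟩
  · -- 3 ∣ n : three classes of size 4n/3
    intro h3
    obtain ⟨mm, hmm⟩ : ∃ m, n = 3 * m := id h3
    -- the key characterization
    have key : ∀ x y : CPEdge n,
        Quot.mk (stepRel n k) x = Quot.mk (stepRel n k) y ↔ phi h3 k x = phi h3 k y := by
      intro x y
      constructor
      · intro h
        exact congrArg (Quot.lift (phi h3 k) (phi_rel h3)) h
      · intro h
        rw [mk_toA x, mk_toA y]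
        apply mk_eq_of_pi_eq h3
        have hx := phi_toA (k := k) h3 x
        have hy := phi_toA (k := k) h3 y
        rw [hx, hy] at h
        simpa [phi, cIdx] using h
    -- phi is surjective
    have hsurj : ∀ v : ZMod 3, ∃ x : CPEdge n, phi h3 k x = v := by
      intro v
      refine ⟨((v.val : ZMod n), 3), ?_⟩
      simp [phi, cIdx, map_natCast, ZMod.natCast_zmod_val]
    -- the induced bijection with ZMod 3
    let F : Quot (stepRel n k) → ZMod 3 := Quot.lift (phi h3 k) (phi_rel h3)
    have hFbij : Function.Bijective F := by
      constructor
      · intro a b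
        induction a using Quot.ind with | _ x =>
        induction b using Quot.ind with | _ y =>
        intro h
        exact (key x y).mpr h
      · intro v
        obtain ⟨x, hx⟩ := hsurj v
        exact ⟨Quot.mk _ x, hx⟩
    have hcard : Nat.card (Quot (stepRel n k)) = 3 := by
      rw [Nat.card_congr (Equiv.ofBijective F hFbij), Nat.card_zmod]
    refine ⟨hcard, ?_⟩
    intro q
    obtain ⟨x₀, rfl⟩ := Quot.exists_rep q
    set v := phi h3 k x₀ with hv
    -- fiber = phi-fiber
    have e1 : {x : CPEdge n // Quot.mk (stepRel n k) x = Quot.mk (stepRel n k) x₀} ≃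
        {x : CPEdge n // phi h3 k x = v} :=
      Equiv.subtypeEquivRight (fun x => key x x₀)
    -- phi-fiber = ker × Fin 4
    let s : Fin 4 → ZMod n := fun t => ((v - cIdx k t).val : ZMod n)
    have hs : ∀ t, ZMod.castHom h3 (ZMod 3) (s t) = v - cIdx k t := by
      intro t
      simp [s, map_natCast, ZMod.natCast_zmod_val]
    have e2 : {x : CPEdge n // phi h3 k x = v} ≃
        {u : ZMod n // ZMod.castHom h3 (ZMod 3) u = 0} × Fin 4 :=
      { toFun := fun x => (⟨x.1.1 - s x.1.2, by
          have := x.2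
          simp only [phi] at this
          rw [map_sub, hs]
          linear_combination this⟩, x.1.2)
        invFun := fun y => ⟨(y.1.1 + s y.2, y.2), by
          simp only [phi, map_add, hs, y.1.2]
          ring⟩
        left_inv := fun x => by
          apply Subtype.ext
          obtain ⟨⟨i, t⟩, hx⟩ := x
          simp
        right_inv := fun y => by
          obtain ⟨⟨u, hu⟩, t⟩ := y
          simp }
    -- ker ≃ Fin (n / 3)
    have e3 : {u : ZMod n // ZMod.castHom h3 (ZMod 3) u = 0} ≃ Fin (n / 3) :=
      { toFun := fun u => ⟨u.1.val / 3, by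
          have h1 : u.1.val < n := ZMod.val_lt u.1
          have h2 : 3 ∣ u.1.val := (pi_eq_zero_iff h3 u.1).mp u.2
          omega⟩
        invFun := fun j => ⟨((3 * j.1 : ℕ) : ZMod n), by
          rw [pi_eq_zero_iff h3, ZMod.val_cast_of_lt (by omega)]
          omega⟩
        left_inv := fun u => by
          apply Subtype.ext
          have h2 : 3 ∣ u.1.val := (pi_eq_zero_iff h3 u.1).mp u.2
          show ((3 * (u.1.val / 3) : ℕ) : ZMod n) = u.1
          rw [Nat.mul_div_cancel' h2, ZMod.natCast_zmod_val]
        right_inv := fun j => by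
          apply Fin.ext
          show (((3 * j.1 : ℕ) : ZMod n)).val / 3 = j.1
          rw [ZMod.val_cast_of_lt (by omega)]
          omega }
    have := Nat.card_congr ((e1.trans e2).trans (e3.prodCongr (Equiv.refl (Fin 4))))
    rw [this, Nat.card_prod]
    have hf1 : Nat.card (Fin (n / 3)) = n / 3 := by
      simp [Nat.card_eq_fintype_card]
    have hf2 : Nat.card (Fin 4) = 4 := by
      simp [Nat.card_eq_fintype_card]
    rw [hf1, hf2]
    omega
end
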